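/- Let R be an associative unital ring and let C_* be a chain complex of left R-modules with C_k = 0 for k < 0 and for k > N (for some natural number N). If the identity chain map of C_* is chain homotopic to the zero chain map (i.e., there exist R-linear maps h_k : C_k → C_{k+1} with d_{k+1} ∘ h_k + h_{k−1} ∘ d_k = id_{C_k} for all k), then there is an isomorphism of R-modules ⨁_{k even} C_k ≅ ⨁_{k odd} C_k. -/

import Mathlib

/-!
The map `d + h` sends the even part to the odd part, and `h + d` sends it back. Since `d² = 0`
and `dh + hd = 1`, both composites equal `1 + h²`, and `h²` is nilpotent because it raises
degrees by two in a bounded complex. So both composites are invertible, and `d + h` is an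
isomorphism.
-/

universe u

open DirectSum

namespace DirectSum

variable {R : Type*} [Semiring R] {M N : ℕ → Type*}
  [∀ i, AddCommMonoid (M i)] [∀ i, Module R (M i)]
  [∀ i, AddCommMonoid (N i)] [∀ i, Module R (N i)]

def shiftUp (f : ∀ i, M i →ₗ[R] N (i + 1)) : (⨁ i, M i) →ₗ[R] ⨁ i, N i :=
  toModule R ℕ _ fun i => lof R ℕ N (i + 1) ∘ₗ f i

def shiftDown (f : ∀ i, M (i + 1) →ₗ[R] N i) : (⨁ i, M i) →ₗ[R] ⨁ i, N i :=
  toModule R ℕ _ fun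
    | 0 => 0
    | i + 1 => lof R ℕ N i ∘ₗ f i

@[simp]
theorem shiftUp_lof (f : ∀ i, M i →ₗ[R] N (i + 1)) (i : ℕ) (x : M i) :
    shiftUp f (lof R ℕ M i x) = lof R ℕ N (i + 1) (f i x) :=
  toModule_lof R i x

@[simp]
theorem shiftDown_lof_zero (f : ∀ i, M (i + 1) →ₗ[R] N i) (x : M 0) :
    shiftDown f (lof R ℕ M 0 x) = 0 :=
  toModule_lof R 0 x

@[simp]
theorem shiftDown_lof_succ (f : ∀ i, M (i + 1) →ₗ[R] N i) (i : ℕ) (x : M (i + 1)) :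
    shiftDown f (lof R ℕ M (i + 1) x) = lof R ℕ N i (f i x) :=
  toModule_lof R (i + 1) x

theorem shiftUp_pow_lof_eq_zero (f : ∀ i, M i →ₗ[R] M (i + 1)) {n : ℕ}
    (hM : ∀ i, n < i → Subsingleton (M i)) :
    ∀ m i (x : M i), n < i + m → (shiftUp f ^ m) (lof R ℕ M i x) = 0
  | 0, i, x, hi => by
    have := hM i hi
    rw [Subsingleton.elim x 0, map_zero, map_zero]
  | m + 1, i, x, hi => by
    rw [pow_succ, Module.End.mul_apply, shiftUp_lof]
    exact shiftUp_pow_lof_eq_zero f hM m (i + 1) _ (by omega)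

theorem isNilpotent_shiftUp (f : ∀ i, M i →ₗ[R] M (i + 1)) (n : ℕ)
    (hM : ∀ i, n < i → Subsingleton (M i)) : IsNilpotent (shiftUp f) :=
  ⟨n + 1, linearMap_ext R fun i => LinearMap.ext fun x =>
    shiftUp_pow_lof_eq_zero f hM (n + 1) i x (by omega)⟩

end DirectSum

theorem LinearMap.bijective_of_isUnit_comp {R M N : Type*} [Semiring R] [AddCommMonoid M]
    [AddCommMonoid N] [Module R M] [Module R N] {f : M →ₗ[R] N} {g : N →ₗ[R] M}
    (hgf : IsUnit (g ∘ₗ f)) (hfg : IsUnit (f ∘ₗ g)) : Function.Bijective f :=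
  ⟨Function.Injective.of_comp (f := g) ((Module.End.isUnit_iff _).mp hgf).injective,
    Function.Surjective.of_comp (g := g) ((Module.End.isUnit_iff _).mp hfg).surjective⟩

namespace ContractibleComplex

variable {R : Type*} [Ring R] {C : ℕ → Type*} [∀ k, AddCommGroup (C k)]
  [∀ k, Module R (C k)] (d : ∀ k, C (k + 1) →ₗ[R] C k) (h : ∀ k, C k →ₗ[R] C (k + 1))

/-- `d + h`, from the even to the odd degrees. -/
def evenToOdd : (⨁ i, C (2 * i)) →ₗ[R] ⨁ i, C (2 * i + 1) :=
  lmap (fun i => h (2 * i)) + shiftDown (N := fun i => C (2 * i + 1)) fun i => d (2 * i + 1)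

/-- `h + d`, from the odd to the even degrees. -/
def oddToEven : (⨁ i, C (2 * i + 1)) →ₗ[R] ⨁ i, C (2 * i) :=
  shiftUp (N := fun i => C (2 * i)) (fun i => h (2 * i + 1)) + lmap fun i => d (2 * i)

variable {d h}

@[simp]
theorem evenToOdd_lof_zero (x : C 0) :
    evenToOdd d h (lof R ℕ (fun i => C (2 * i)) 0 x) =
      lof R ℕ (fun i => C (2 * i + 1)) 0 (h 0 x) := by
  simp [evenToOdd]

@[simp]
theorem evenToOdd_lof_succ (i : ℕ) (x : C (2 * (i + 1))) :
    evenToOdd d h (lof R ℕ (fun i => C (2 * i)) (i + 1) x) =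
      lof R ℕ (fun i => C (2 * i + 1)) (i + 1) (h (2 * (i + 1)) x) +
        lof R ℕ (fun i => C (2 * i + 1)) i (d (2 * i + 1) x) := by
  simp [evenToOdd]

@[simp]
theorem oddToEven_lof (i : ℕ) (x : C (2 * i + 1)) :
    oddToEven d h (lof R ℕ (fun i => C (2 * i + 1)) i x) =
      lof R ℕ (fun i => C (2 * i)) (i + 1) (h (2 * i + 1) x) +
        lof R ℕ (fun i => C (2 * i)) i (d (2 * i) x) := by
  simp [oddToEven]

theorem oddToEven_comp_evenToOdd (hdd : ∀ k x, d k (d (k + 1) x) = 0)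
    (hh0 : ∀ x, d 0 (h 0 x) = x) (hhk : ∀ k x, d (k + 1) (h (k + 1) x) + h k (d k x) = x) :
    oddToEven d h ∘ₗ evenToOdd d h =
      1 + shiftUp (M := fun i => C (2 * i)) fun i => h (2 * i + 1) ∘ₗ h (2 * i) := by
  refine linearMap_ext R fun i => LinearMap.ext fun x => ?_
  rcases i with _ | j
  · simp [hh0, add_comm]
  · have hdh : lof R ℕ (fun i => C (2 * i)) (j + 1) (d (2 * (j + 1)) (h (2 * (j + 1)) x)) +
        lof R ℕ (fun i => C (2 * i)) (j + 1) (h (2 * j + 1) (d (2 * j + 1) x)) =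
          lof R ℕ (fun i => C (2 * i)) (j + 1) x := by
      rw [← map_add]
      exact congrArg _ (hhk (2 * j + 1) x)
    simp only [LinearMap.comp_apply, evenToOdd_lof_succ, oddToEven_lof, map_add, hdd, map_zero,
      add_zero, LinearMap.add_apply, Module.End.one_apply, shiftUp_lof]
    linear_combination (norm := abel) hdh

theorem evenToOdd_comp_oddToEven (hdd : ∀ k x, d k (d (k + 1) x) = 0)
    (hhk : ∀ k x, d (k + 1) (h (k + 1) x) + h k (d k x) = x) :
    evenToOdd d h ∘ₗ oddToEven d h =
      1 + shiftUp (M := fun i => C (2 * i + 1)) fun i => h (2 * (i + 1)) ∘ₗ h (2 * i + 1) := by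
  refine linearMap_ext R fun i => LinearMap.ext fun x => ?_
  rcases i with _ | j
  · have hdh : lof R ℕ (fun i => C (2 * i + 1)) 0 (d 1 (h 1 x)) +
        lof R ℕ (fun i => C (2 * i + 1)) 0 (h 0 (d 0 x)) =
          lof R ℕ (fun i => C (2 * i + 1)) 0 x := by
      rw [← map_add, hhk]
    simp only [LinearMap.comp_apply, oddToEven_lof, map_add, evenToOdd_lof_succ,
      evenToOdd_lof_zero, LinearMap.add_apply, Module.End.one_apply, shiftUp_lof]
    linear_combination (norm := abel) hdh
  · have hdh : lof R ℕ (fun i => C (2 * i + 1)) (j + 1)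
          (d (2 * (j + 1) + 1) (h (2 * (j + 1) + 1) x)) +
        lof R ℕ (fun i => C (2 * i + 1)) (j + 1) (h (2 * (j + 1)) (d (2 * (j + 1)) x)) =
          lof R ℕ (fun i => C (2 * i + 1)) (j + 1) x := by
      rw [← map_add]
      exact congrArg _ (hhk (2 * j + 2) x)
    have hdd' : d (2 * j + 1) (d (2 * (j + 1)) x) = 0 := hdd _ x
    simp only [LinearMap.comp_apply, oddToEven_lof, map_add, evenToOdd_lof_succ, hdd', map_zero,
      add_zero, LinearMap.add_apply, Module.End.one_apply, shiftUp_lof]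
    linear_combination (norm := abel) hdh

end ContractibleComplex

open ContractibleComplex

/-- The counting step at the end of Wall's Lemma 2.3 (Lemma 1.x of the paper): if a chain
complex of left `R`-modules vanishing in negative degrees and in degrees above `N` is
contractible (the identity is chain homotopic to zero via a contraction `h`, so that
`d_{k+1} ∘ h_k + h_{k-1} ∘ d_k = id` for all `k`, reading `d_1 ∘ h_0 = id` in degree `0`),
then `⨁_{k even} C_k ≅ ⨁_{k odd} C_k` as `R`-modules.  Here `d k : C (k+1) →ₗ[R] C k` is
the differential `d_{k+1}`. -/
theorem even_part_linearEquiv_odd_part_of_contractible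
    {R : Type u} [Ring R] {C : ℕ → Type u} [∀ k, AddCommGroup (C k)] [∀ k, Module R (C k)]
    (d : ∀ k, C (k + 1) →ₗ[R] C k)
    (hdd : ∀ k, (d k).comp (d (k + 1)) = 0)
    (N : ℕ) (hbdd : ∀ k, N < k → Subsingleton (C k))
    (h : ∀ k, C k →ₗ[R] C (k + 1))
    (hh0 : (d 0).comp (h 0) = LinearMap.id)
    (hhk : ∀ k, (d (k + 1)).comp (h (k + 1)) + (h k).comp (d k) = LinearMap.id) :
    Nonempty ((DirectSum ℕ fun i => C (2 * i)) ≃ₗ[R] DirectSum ℕ fun i => C (2 * i + 1)) := by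
  have hdd' : ∀ k x, d k (d (k + 1) x) = 0 := fun k => LinearMap.congr_fun (hdd k)
  have hh0' : ∀ x, d 0 (h 0 x) = x := LinearMap.congr_fun hh0
  have hhk' : ∀ k x, d (k + 1) (h (k + 1) x) + h k (d k x) = x :=
    fun k => LinearMap.congr_fun (hhk k)
  refine ⟨.ofBijective (evenToOdd d h)
    (LinearMap.bijective_of_isUnit_comp (g := oddToEven d h) ?_ ?_)⟩
  · rw [oddToEven_comp_evenToOdd hdd' hh0' hhk']
    exact (isNilpotent_shiftUp _ N fun i hi => hbdd (2 * i) (by omega)).isUnit_one_add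
  · rw [evenToOdd_comp_oddToEven hdd' hhk']
    exact (isNilpotent_shiftUp _ N fun i hi => hbdd (2 * i + 1) (by omega)).isUnit_one_add
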